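/- Let G be a compact group acting linearly on a finite-dimensional real representation V and let x ∈ V with averaged point x₀ = ∫_G g·x dg. Then x₀ is the unique G-fixed point contained in conv(G·x), and x₀ lies in the relative interior of conv(G·x). -/

import Mathlib

/-!
The orbit average `x₀` is a barycentre of the orbit `G·x`, hence lies in `conv(G·x)`, which is
compact by Carathéodory. Left invariance of Haar measure makes `x₀` fixed; right invariance (a
Haar probability measure is bi-invariant) makes the averaging map constant on the orbit, so by
linearity it is constant on `conv(G·x)`, where it is the identity on fixed points. Finally, a
linear functional maximised on `conv(G·x)` at `x₀` is at most its mean on the orbit, so it is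
constant on the orbit and hence on the hull; by Hahn–Banach inside the affine span this places
`x₀` in the relative interior.
-/

open MeasureTheory Set

theorem convexHull_eq_iUnion_image_stdSimplex {V : Type*} [AddCommGroup V] [Module ℝ V]
    [FiniteDimensional ℝ V] (s : Set V) :
    convexHull ℝ s = ⋃ k : Fin (Module.finrank ℝ V + 2),
      (fun p : (Fin k → ℝ) × (Fin k → V) => ∑ i, p.1 i • p.2 i) ''
        (stdSimplex ℝ (Fin k) ×ˢ univ.pi fun _ => s) := by
  refine Subset.antisymm (fun x hx => ?_) (iUnion_subset fun k => ?_)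
  · obtain ⟨ι, _, z, w, hzs, hz, hw₀, hw₁, rfl⟩ := eq_pos_convex_span_of_mem_convexHull hx
    have hcard : Fintype.card ι < Module.finrank ℝ V + 2 := Nat.lt_succ_of_le <|
      hz.card_le_finrank_succ.trans <| Nat.succ_le_succ (Submodule.finrank_le _)
    let e := (Fintype.equivFin ι).symm
    refine mem_iUnion.2 ⟨⟨_, hcard⟩, (w ∘ e, z ∘ e),
      ⟨⟨fun i => (hw₀ _).le, ?_⟩, fun i _ => hzs (mem_range_self _)⟩, ?_⟩
    · exact (e.sum_comp w).trans hw₁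
    · exact e.sum_comp fun i => w i • z i
  · rintro _ ⟨⟨w, z⟩, ⟨hw, hz⟩, rfl⟩
    exact (convex_convexHull ℝ s).sum_mem (fun i _ => hw.1 i) hw.2
      fun i _ => subset_convexHull ℝ s (hz i (mem_univ i))

theorem IsCompact.convexHull {V : Type*} [AddCommGroup V] [Module ℝ V] [TopologicalSpace V]
    [IsTopologicalAddGroup V] [ContinuousSMul ℝ V] [FiniteDimensional ℝ V] {s : Set V}
    (hs : IsCompact s) : IsCompact (convexHull ℝ s) := by
  rw [convexHull_eq_iUnion_image_stdSimplex]
  exact isCompact_iUnion fun k =>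
    ((isCompact_stdSimplex ℝ (Fin k)).prod (isCompact_univ_pi fun _ => hs)).image (by fun_prop)

theorem LinearMap.eq_of_mem_convexHull {𝕜 E F : Type*} [Field 𝕜] [LinearOrder 𝕜]
    [IsStrictOrderedRing 𝕜] [AddCommGroup E] [Module 𝕜 E] [AddCommGroup F] [Module 𝕜 F]
    (f : E →ₗ[𝕜] F) {s : Set E} {c : F} (hf : ∀ y ∈ s, f y = c) {y : E}
    (hy : y ∈ convexHull 𝕜 s) : f y = c :=
  convexHull_min hf ((convex_singleton c).linear_preimage f) hy

theorem Convex.mem_interior_of_forall_eq {E : Type*} [AddCommGroup E] [Module ℝ E]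
    [TopologicalSpace E] [IsTopologicalAddGroup E] [ContinuousSMul ℝ E] {s : Set E}
    (hs : Convex ℝ s) (hint : (interior s).Nonempty) {x : E}
    (H : ∀ f : StrongDual ℝ E, (∀ y ∈ s, f y ≤ f x) → ∀ y ∈ s, f y = f x) :
    x ∈ interior s := by
  by_contra hxs
  obtain ⟨f, hf₀, hfx⟩ := geometric_hahn_banach_of_nonempty_interior_point hs hxs hint
  have hconst : f '' interior s ⊆ {f x} :=
    image_subset_iff.2 fun y hy => H f hfx y (interior_subset hy)
  have hopen : IsOpen (f '' interior s) := f.isOpenMap_of_ne_zero hf₀ _ isOpen_interior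
  rw [(hint.image f).subset_singleton_iff.1 hconst] at hopen
  exact not_isOpen_singleton _ hopen

theorem Convex.mem_intrinsicInterior_of_forall_eq {V : Type*} [NormedAddCommGroup V]
    [NormedSpace ℝ V] [FiniteDimensional ℝ V] {s : Set V} (hs : Convex ℝ s) {x : V}
    (hx : x ∈ s)
    (H : ∀ f : StrongDual ℝ V, (∀ y ∈ s, f y ≤ f x) → ∀ y ∈ s, f y = f x) :
    x ∈ intrinsicInterior ℝ s := by
  -- `s` is the image of the full-dimensional convex set `t` under `v ↦ x + v` on the direction.
  set D := (affineSpan ℝ s).direction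
  let ψ : D →ᵃⁱ[ℝ] V :=
    (AffineIsometryEquiv.constVAdd ℝ V x).toAffineIsometry.comp D.subtypeₗᵢ.toAffineIsometry
  have hψ : ∀ v : D, ψ v = x + v := fun _ => rfl
  have hψs : ψ '' (ψ ⁻¹' s) = s := image_preimage_eq_of_subset fun y hy =>
    ⟨⟨y - x, AffineSubspace.vsub_mem_direction (subset_affineSpan ℝ s hy)
      (subset_affineSpan ℝ s hx)⟩, by simp [hψ]⟩
  set t := ψ ⁻¹' s
  have ht : Convex ℝ t := hs.affine_preimage ψ.toAffineMap
  have h0 : (0 : D) ∈ t := by simpa [t, hψ] using hx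
  have hspan : affineSpan ℝ t = ⊤ := by
    rw [AffineSubspace.affineSpan_eq_top_iff_vectorSpan_eq_top_of_nonempty ℝ D D ⟨0, h0⟩]
    apply Submodule.map_injective_of_injective D.injective_subtype
    rw [Submodule.map_top, Submodule.range_subtype]
    have := AffineMap.map_vectorSpan ψ.toAffineMap (s := t)
    rw [AffineIsometry.coe_toAffineMap, hψs] at this
    exact this.trans (direction_affineSpan ℝ s).symm
  have Ht : ∀ f : StrongDual ℝ D, (∀ y ∈ t, f y ≤ f 0) → ∀ y ∈ t, f y = f 0 := by
    intro f hf y hy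
    obtain ⟨F, hF, -⟩ := exists_extension_norm_eq D f
    have hFψ : ∀ v : D, F (ψ v) = F x + f v := fun v => by simp [hψ, hF]
    have hFs : ∀ z ∈ s, F z ≤ F x := by
      rw [← hψs]
      rintro _ ⟨v, hv, rfl⟩
      simpa [hFψ] using hf v hv
    simpa [hFψ] using H F hFs (ψ y) hy
  have h0int := interior_subset_intrinsicInterior (𝕜 := ℝ) (ht.mem_interior_of_forall_eq
    (ht.interior_nonempty_iff_affineSpan_eq_top.2 hspan) Ht)
  rw [← hψs, AffineIsometry.intrinsicInterior_image]
  exact ⟨0, h0int, by simp [hψ]⟩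

theorem Continuous.integral_mem_convexHull_range {X V : Type*} [TopologicalSpace X]
    [CompactSpace X] [MeasurableSpace X] [OpensMeasurableSpace X] (μ : Measure X)
    [IsProbabilityMeasure μ] [NormedAddCommGroup V] [NormedSpace ℝ V] [FiniteDimensional ℝ V]
    {f : X → V} (hf : Continuous f) : ∫ x, f x ∂μ ∈ convexHull ℝ (range f) :=
  (convex_convexHull ℝ _).integral_mem (isCompact_range hf).convexHull.isClosed
    (.of_forall fun x => subset_convexHull ℝ _ (mem_range_self x))
    (hf.integrable_of_hasCompactSupport (.of_compactSpace f))

theorem Continuous.eq_of_le_of_integral_eq {X : Type*} [TopologicalSpace X] [CompactSpace X]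
    [MeasurableSpace X] [OpensMeasurableSpace X] (μ : Measure X) [IsProbabilityMeasure μ]
    [μ.IsOpenPosMeasure] {φ : X → ℝ} (hφ : Continuous φ) {c : ℝ} (hle : ∀ x, φ x ≤ c)
    (hint : ∫ x, φ x ∂μ = c) (x : X) : φ x = c := by
  have hφint : Integrable φ μ := hφ.integrable_of_hasCompactSupport (.of_compactSpace φ)
  have hgap : Integrable (fun x => c - φ x) μ := (integrable_const c).sub hφint
  have hzero : ∫ x, (c - φ x) ∂μ = 0 := by
    simp [integral_sub (integrable_const c) hφint, hint]
  have hae := (integral_eq_zero_iff_of_nonneg (fun x => sub_nonneg.2 (hle x)) hgap).1 hzero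
  have hgap_zero :=
    (Continuous.ae_eq_iff_eq μ (continuous_const.sub hφ) continuous_const).1 hae
  exact (sub_eq_zero.1 (congrFun hgap_zero x)).symm

theorem MeasureTheory.Measure.IsHaarMeasure.isMulRightInvariant_of_isProbabilityMeasure
    {G : Type*} [Group G] [TopologicalSpace G] [IsTopologicalGroup G] [LocallyCompactSpace G]
    [MeasurableSpace G] [BorelSpace G] (μ : Measure G) [μ.IsHaarMeasure]
    [IsProbabilityMeasure μ] : μ.IsMulRightInvariant where
  map_mul_right_eq_self g := by
    have : IsProbabilityMeasure (μ.map (· * g)) :=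
      isProbabilityMeasure_map (measurable_mul_const g).aemeasurable
    exact isHaarMeasure_eq_of_isProbabilityMeasure _ μ

namespace Representation

variable {G V : Type*} [Group G] [TopologicalSpace G] [CompactSpace G] [MeasurableSpace G]
  [BorelSpace G] [NormedAddCommGroup V] [NormedSpace ℝ V]
  (μ : Measure G) [IsProbabilityMeasure μ] {ρ : Representation ℝ G V}

theorem integrable_apply (hρ : ∀ v : V, Continuous fun g => ρ g v) (v : V) :
    Integrable (fun g => ρ g v) μ :=
  (hρ v).integrable_of_hasCompactSupport (.of_compactSpace _)

noncomputable def orbitAverage (hρ : ∀ v : V, Continuous fun g => ρ g v) : V →ₗ[ℝ] V where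
  toFun v := ∫ g, ρ g v ∂μ
  map_add' u v := by
    simp only [map_add]
    exact integral_add (integrable_apply μ hρ u) (integrable_apply μ hρ v)
  map_smul' c v := by
    simp only [map_smul]
    exact integral_smul c _

variable (hρ : ∀ v : V, Continuous fun g => ρ g v)

theorem orbitAverage_apply (v : V) : orbitAverage μ hρ v = ∫ g, ρ g v ∂μ := rfl

theorem apply_orbitAverage [IsTopologicalGroup G] [μ.IsMulLeftInvariant] [FiniteDimensional ℝ V]
    (h : G) (v : V) : ρ h (orbitAverage μ hρ v) = orbitAverage μ hρ v := by
  calc ρ h (∫ g, ρ g v ∂μ)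
      = ∫ g, ρ h (ρ g v) ∂μ :=
        ((ρ h).toContinuousLinearMap.integral_comp_comm (integrable_apply μ hρ v)).symm
    _ = ∫ g, ρ (h * g) v ∂μ := by simp only [map_mul, Module.End.mul_apply]
    _ = ∫ g, ρ g v ∂μ := integral_mul_left_eq_self (fun g => ρ g v) h

theorem orbitAverage_apply_apply [IsTopologicalGroup G] [μ.IsHaarMeasure] (h : G) (v : V) :
    orbitAverage μ hρ (ρ h v) = orbitAverage μ hρ v := by
  have := Measure.IsHaarMeasure.isMulRightInvariant_of_isProbabilityMeasure μ
  simp_rw [orbitAverage_apply, ← Module.End.mul_apply, ← map_mul]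
  exact integral_mul_right_eq_self (fun g => ρ g v) h

theorem orbitAverage_eq_self [CompleteSpace V] {v : V} (hv : ∀ g, ρ g v = v) :
    orbitAverage μ hρ v = v := by
  simp [orbitAverage_apply, hv]

theorem orbitAverage_mem_convexHull [FiniteDimensional ℝ V] (v : V) :
    orbitAverage μ hρ v ∈ convexHull ℝ (range fun g => ρ g v) :=
  (hρ v).integral_mem_convexHull_range μ

theorem eq_orbitAverage_of_mem_convexHull [IsTopologicalGroup G] [μ.IsHaarMeasure]
    [CompleteSpace V] {v y : V} (hy : y ∈ convexHull ℝ (range fun g => ρ g v))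
    (hy_fixed : ∀ g, ρ g y = y) : y = orbitAverage μ hρ v := by
  rw [← orbitAverage_eq_self μ hρ hy_fixed]
  exact (orbitAverage μ hρ).eq_of_mem_convexHull
    (by rintro _ ⟨g, rfl⟩; exact orbitAverage_apply_apply μ hρ g v) hy

theorem orbitAverage_mem_intrinsicInterior [μ.IsHaarMeasure] [FiniteDimensional ℝ V] (v : V) :
    orbitAverage μ hρ v ∈ intrinsicInterior ℝ (convexHull ℝ (range fun g => ρ g v)) := by
  refine (convex_convexHull ℝ _).mem_intrinsicInterior_of_forall_eq
    (orbitAverage_mem_convexHull μ hρ v) fun f hf => ?_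
  have horbit : ∀ g, f (ρ g v) = f (orbitAverage μ hρ v) :=
    (f.continuous.comp (hρ v)).eq_of_le_of_integral_eq μ
      (fun g => hf _ (subset_convexHull ℝ _ (mem_range_self g)))
      (f.integral_comp_comm (integrable_apply μ hρ v))
  intro y hy
  exact f.toLinearMap.eq_of_mem_convexHull (by rintro _ ⟨g, rfl⟩; exact horbit g) hy

end Representation

/-- For a compact group `G` acting linearly on a finite-dimensional real representation `V`
and `x ∈ V`, the averaged point `x₀ = ∫_G g·x dg` is the unique `G`-fixed point of
`conv(G·x)`, and it lies in the relative interior of `conv(G·x)`. -/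
theorem stmt_2 {G V : Type*} [Group G] [TopologicalSpace G] [IsTopologicalGroup G]
    [CompactSpace G] [MeasurableSpace G] [BorelSpace G]
    [NormedAddCommGroup V] [NormedSpace ℝ V] [FiniteDimensional ℝ V]
    (μ : Measure G) [μ.IsHaarMeasure] [IsProbabilityMeasure μ]
    (ρ : Representation ℝ G V) (hρ : ∀ v : V, Continuous fun g => ρ g v)
    (x : V) (x₀ : V) (hx₀ : x₀ = ∫ g, ρ g x ∂μ) :
    x₀ ∈ convexHull ℝ (Set.range fun g => ρ g x) ∧
    (∀ g : G, ρ g x₀ = x₀) ∧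
    (∀ y ∈ convexHull ℝ (Set.range fun g => ρ g x), (∀ g : G, ρ g y = y) → y = x₀) ∧
    x₀ ∈ intrinsicInterior ℝ (convexHull ℝ (Set.range fun g => ρ g x)) := by
  rw [hx₀, ← ρ.orbitAverage_apply μ hρ]
  exact ⟨ρ.orbitAverage_mem_convexHull μ hρ x, fun g => ρ.apply_orbitAverage μ hρ g x,
    fun y hy hy_fixed => ρ.eq_orbitAverage_of_mem_convexHull μ hρ hy hy_fixed,
    ρ.orbitAverage_mem_intrinsicInterior μ hρ x⟩
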